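/- The kernel Q admits at least two distinct invariant probability measures; more precisely, there exist Q-invariant probability measures μ₁ and μ₂ on 𝕋 that are mutually singular. (One may take μ₁ giving full mass to the set of points whose ternary digits are eventually 0, and μ₂ giving full mass to the disjoint set of points whose ternary digits are eventually 1.) -/

import Mathlib

open MeasureTheory
open scoped ENNReal

/-!
On the points `0.s₁…sₙ c` — a finite word of ternary digits followed by the expansion of a
fixed point `c` of tripling, `c = 0` or `c = 1/2 = 0.111…` — the kernel `Q` is a walk on the
ternary tree of digit words: tripling deletes the first digit (to the parent, probability
`1 - 3p`) and the three inverse branches prepend a digit (to each child, probability `p`).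
Detailed balance makes the weights `w ^ n`, `w = p / (1 - 3p)`, invariant, and they are
summable over the `3 ^ n` words of length `n` exactly when `3w < 1`, i.e. `p < 1/6`. The two
orbits are disjoint countable sets, so the two invariant laws are mutually singular.
-/

/-- The representative in `[0,1)` of a point of the unit circle `𝕋 = ℝ/ℤ`. -/
noncomputable def circleRep (z : UnitAddCircle) : ℝ :=
  ((AddCircle.equivIco 1 0 z : Set.Ico (0 : ℝ) (0 + 1)) : ℝ)

/-- The Markov kernel `Q(z,·) = (1−3p)·δ_{3z} + p·(δ_{z̄/3} + δ_{(z̄+1)/3} + δ_{(z̄+2)/3})`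
on the circle, arithmetic taken modulo 1. -/
noncomputable def Qkern (p : ℝ) (z : UnitAddCircle) : Measure UnitAddCircle :=
  ENNReal.ofReal (1 - 3 * p) • Measure.dirac (((3 * circleRep z : ℝ) : UnitAddCircle))
    + ENNReal.ofReal p •
      (Measure.dirac (((circleRep z / 3 : ℝ) : UnitAddCircle))
        + Measure.dirac ((((circleRep z + 1) / 3 : ℝ) : UnitAddCircle))
        + Measure.dirac ((((circleRep z + 2) / 3 : ℝ) : UnitAddCircle)))

/-- The `n`-step transition kernel `Q^n`. -/
noncomputable def Qiter (p : ℝ) : ℕ → UnitAddCircle → Measure UnitAddCircle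
  | 0, z => Measure.dirac z
  | n + 1, z => (Qiter p n z).bind (Qkern p)

open Set

section TreeMeasure

variable {α X : Type*}

theorem tsum_list_eq_add_tsum_cons (G : List α → ℝ≥0∞) :
    ∑' s, G s = G [] + ∑' x : α × List α, G (x.1 :: x.2) := by
  have hcons : Function.Injective fun x : α × List α => x.1 :: x.2 := fun x y h =>
    Prod.ext (List.cons.inj h).1 (List.cons.inj h).2
  rw [ENNReal.tsum_eq_add_tsum_ite [], ← hcons.tsum_eq]
  · simp
  · rintro (_ | ⟨a, t⟩) hs
    · simp at hs
    · exact ⟨(a, t), rfl⟩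

variable [Fintype α]

theorem tsum_pow_length (w : ℝ≥0∞) :
    ∑' s : List α, w ^ s.length = (1 - Fintype.card α * w)⁻¹ := by
  rw [← (List.equivSigmaTuple (α := α)).symm.tsum_eq, ENNReal.tsum_sigma']
  simp only [List.equivSigmaTuple, Equiv.coe_fn_symm_mk, List.length_ofFn, tsum_fintype,
    Finset.sum_const, Finset.card_univ, Fintype.card_fun, Fintype.card_fin, nsmul_eq_mul,
    Nat.cast_pow, ← mul_pow]
  exact ENNReal.tsum_geometric _

/-- Detailed balance: with `a * w = b`, the flow `w ^ |s| * b` from a word `s` to a child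
`j :: s` equals the flow `w ^ (|s| + 1) * a` back to its parent. -/
theorem tsum_pow_length_mul_tail_add_children {a b w : ℝ≥0∞}
    (hab : a + Fintype.card α * b = 1) (hw : a * w = b) (D : List α → ℝ≥0∞) :
    ∑' s, w ^ s.length * (a * D s.tail + b * ∑ j, D (j :: s)) = ∑' s, w ^ s.length * D s := by
  have hroot : ∑' s, w ^ s.length * D s
      = D [] + w * ∑' x : α × List α, w ^ x.2.length * D (x.1 :: x.2) := by
    rw [tsum_list_eq_add_tsum_cons, ← ENNReal.tsum_mul_left]
    simp only [List.length_nil, pow_zero, one_mul, List.length_cons, pow_succ', mul_assoc]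
  have hparent : ∑' s : List α, w ^ s.length * D s.tail
      = D [] + Fintype.card α * w * ∑' s, w ^ s.length * D s := by
    rw [tsum_list_eq_add_tsum_cons, ENNReal.tsum_prod', ← ENNReal.tsum_mul_left]
    simp [tsum_fintype, pow_succ', mul_assoc, ENNReal.tsum_mul_left]
  have hchildren : ∑' s : List α, w ^ s.length * ∑ j, D (j :: s)
      = ∑' x : α × List α, w ^ x.2.length * D (x.1 :: x.2) := by
    rw [ENNReal.tsum_prod', ENNReal.tsum_comm]
    exact tsum_congr fun s => by rw [tsum_fintype, Finset.mul_sum]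
  calc ∑' s : List α, w ^ s.length * (a * D s.tail + b * ∑ j, D (j :: s))
      = a * ∑' s : List α, w ^ s.length * D s.tail
          + b * ∑' s : List α, w ^ s.length * ∑ j, D (j :: s) := by
        simp only [mul_add, ENNReal.tsum_add, mul_left_comm _ a, mul_left_comm _ b,
          ENNReal.tsum_mul_left]
    _ = (a + Fintype.card α * b) * ∑' s, w ^ s.length * D s := by
        rw [hparent, hchildren, ← hw]
        generalize ∑' s : List α, w ^ s.length * D s = T at hroot ⊢
        rw [hroot]; ring
    _ = ∑' s, w ^ s.length * D s := by rw [hab, one_mul]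

variable [MeasurableSpace X]

noncomputable def treeMeasure (w : ℝ≥0∞) (F : List α → X) : Measure X :=
  (1 - Fintype.card α * w) • Measure.sum fun s => w ^ s.length • Measure.dirac (F s)

theorem lintegral_treeMeasure (w : ℝ≥0∞) (F : List α → X) {f : X → ℝ≥0∞} (hf : Measurable f) :
    ∫⁻ x, f x ∂treeMeasure w F = (1 - Fintype.card α * w) * ∑' s, w ^ s.length * f (F s) := by
  simp [treeMeasure, lintegral_sum_measure, lintegral_dirac' _ hf]

theorem treeMeasure_apply (w : ℝ≥0∞) (F : List α → X) {A : Set X} (hA : MeasurableSet A) :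
    treeMeasure w F A
      = (1 - Fintype.card α * w) * ∑' s, w ^ s.length * A.indicator 1 (F s) := by
  rw [← lintegral_indicator_one hA, lintegral_treeMeasure w F (measurable_one.indicator hA)]

theorem isProbabilityMeasure_treeMeasure {w : ℝ≥0∞} (hw : Fintype.card α * w < 1)
    (F : List α → X) : IsProbabilityMeasure (treeMeasure w F) := by
  constructor
  simp only [treeMeasure_apply w F MeasurableSet.univ, indicator_univ, Pi.one_apply, mul_one,
    tsum_pow_length]
  exact ENNReal.mul_inv_cancel (tsub_pos_of_lt hw).ne'
    (tsub_le_self.trans_lt ENNReal.one_lt_top).ne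

theorem bind_treeMeasure {κ : X → Measure X} (hκ : Measurable κ) {a b w : ℝ≥0∞}
    (hab : a + Fintype.card α * b = 1) (hw : a * w = b) {F : List α → X}
    (hF : ∀ s, κ (F s) = a • Measure.dirac (F s.tail) + b • ∑ j, Measure.dirac (F (j :: s))) :
    (treeMeasure w F).bind κ = treeMeasure w F := by
  ext A hA
  rw [Measure.bind_apply hA hκ.aemeasurable,
    lintegral_treeMeasure w F (Measure.measurable_measure.1 hκ A hA), treeMeasure_apply w F hA]
  simp only [hF, Measure.add_apply, Measure.smul_apply, Measure.coe_finsetSum, Finset.sum_apply,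
    Measure.dirac_apply' _ hA, smul_eq_mul]
  rw [tsum_pow_length_mul_tail_add_children hab hw fun s => A.indicator 1 (F s)]

theorem treeMeasure_compl_range [MeasurableSingletonClass X] (w : ℝ≥0∞) (F : List α → X) :
    treeMeasure w F (range F)ᶜ = 0 := by
  rw [treeMeasure_apply w F (countable_range F).measurableSet.compl]
  simp

theorem mutuallySingular_treeMeasure [MeasurableSingletonClass X] {F G : List α → X}
    (hFG : Disjoint (range F) (range G)) (v w : ℝ≥0∞) :
    treeMeasure v F ⟂ₘ treeMeasure w G :=
  ⟨(range F)ᶜ, (countable_range F).measurableSet.compl, treeMeasure_compl_range v F,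
    measure_mono_null (by simpa [subset_compl_iff_disjoint_right] using hFG)
      (treeMeasure_compl_range w G)⟩

end TreeMeasure

theorem circleRep_coe (x : ℝ) : circleRep x = Int.fract x := by
  simp [circleRep]

theorem measurable_circleRep : Measurable circleRep :=
  measurable_subtype_coe.comp (AddCircle.measurableEquivIco 1 0).measurable

theorem periodic_coe_unitAddCircle : Function.Periodic (fun x : ℝ => (x : UnitAddCircle)) 1 :=
  fun x => AddCircle.coe_add_period 1 x

theorem periodic_sum_dirac_coe_div_three :
    Function.Periodic
      (fun x : ℝ => ∑ j : Fin 3, Measure.dirac (((x + j) / 3 : ℝ) : UnitAddCircle)) 1 := by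
  intro x
  have h : (((x + 3) / 3 : ℝ) : UnitAddCircle) = ((x / 3 : ℝ) : UnitAddCircle) := by
    rw [add_div, div_self three_ne_zero]; exact periodic_coe_unitAddCircle _
  simp only [Fin.sum_univ_three]
  norm_num [add_assoc, h]
  abel

theorem Qkern_coe (p x : ℝ) :
    Qkern p x = ENNReal.ofReal (1 - 3 * p) • Measure.dirac ((3 * x : ℝ) : UnitAddCircle)
      + ENNReal.ofReal p • ∑ j : Fin 3, Measure.dirac (((x + j) / 3 : ℝ) : UnitAddCircle) := by
  have htriple : ((3 * Int.fract x : ℝ) : UnitAddCircle) = ((3 * x : ℝ) : UnitAddCircle) := by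
    have h := periodic_coe_unitAddCircle.sub_int_mul_eq (x := 3 * x) (3 * ⌊x⌋)
    push_cast at h
    rwa [Int.fract, mul_sub, ← mul_one (3 * (⌊x⌋ : ℝ))]
  have hthird := periodic_sum_dirac_coe_div_three.sub_int_mul_eq (x := x) ⌊x⌋
  rw [mul_one, ← Int.fract] at hthird
  rw [Qkern, circleRep_coe, htriple, ← hthird, Fin.sum_univ_three]
  norm_num

theorem measurable_Qkern (p : ℝ) : Measurable (Qkern p) := by
  refine Measure.measurable_of_measurable_coe _ fun A hA => ?_
  have hdirac : Measurable fun x : ℝ => Measure.dirac (x : UnitAddCircle) A :=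
    (Measure.measurable_coe hA).comp (Measure.measurable_dirac.comp AddCircle.measurable_mk')
  have hrep := measurable_circleRep
  simp only [Qkern, Measure.add_apply, Measure.smul_apply, smul_eq_mul]
  fun_prop

/-- `ternaryPoint c s` has the ternary digits `s` followed by those of `c`. -/
noncomputable def ternaryPoint (c : ℝ) : List (Fin 3) → ℝ
  | [] => c
  | j :: s => (ternaryPoint c s + j) / 3

theorem coe_three_mul_ternaryPoint {c : ℝ} (hc : ((3 * c : ℝ) : UnitAddCircle) = c)
    (s : List (Fin 3)) :
    ((3 * ternaryPoint c s : ℝ) : UnitAddCircle) = ternaryPoint c s.tail := by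
  cases s with
  | nil => exact hc
  | cons j t =>
    rw [ternaryPoint, mul_div_cancel₀ _ three_ne_zero, ← mul_one ((j : ℕ) : ℝ)]
    exact periodic_coe_unitAddCircle.nat_mul _ _

theorem Qkern_ternaryPoint (p : ℝ) {c : ℝ} (hc : ((3 * c : ℝ) : UnitAddCircle) = c)
    (s : List (Fin 3)) :
    Qkern p (ternaryPoint c s)
      = ENNReal.ofReal (1 - 3 * p) • Measure.dirac (ternaryPoint c s.tail : UnitAddCircle)
        + ENNReal.ofReal p • ∑ j, Measure.dirac (ternaryPoint c (j :: s) : UnitAddCircle) := by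
  rw [Qkern_coe, coe_three_mul_ternaryPoint hc]
  rfl

theorem exists_three_pow_mul_ternaryPoint (c : ℝ) (s : List (Fin 3)) :
    ∃ a : ℤ, 3 ^ s.length * ternaryPoint c s = c + a := by
  induction s with
  | nil => exact ⟨0, by simp [ternaryPoint]⟩
  | cons j t ih =>
    obtain ⟨a, ha⟩ := ih
    refine ⟨a + (j : ℕ) * 3 ^ t.length, ?_⟩
    rw [ternaryPoint, List.length_cons, pow_succ]
    push_cast
    linear_combination ha

/-- Multiplied by `2 * 3 ^ (|s| + |t|)`, the first point becomes an even integer and the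
second an odd one. -/
theorem coe_ternaryPoint_zero_ne_half (s t : List (Fin 3)) :
    (ternaryPoint 0 s : UnitAddCircle) ≠ ternaryPoint (1 / 2) t := by
  intro h
  obtain ⟨k, hk⟩ := (AddCircle.coe_eq_zero_iff 1).1 (by rw [AddCircle.coe_sub, h, sub_self] :
    ((ternaryPoint (1 / 2) t - ternaryPoint 0 s : ℝ) : UnitAddCircle) = 0)
  obtain ⟨a, ha⟩ := exists_three_pow_mul_ternaryPoint 0 s
  obtain ⟨b, hb⟩ := exists_three_pow_mul_ternaryPoint (1 / 2) t
  have hreal : (3 : ℝ) ^ s.length * (2 * b + 1)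
      = 2 * (3 ^ t.length * a + 3 ^ s.length * 3 ^ t.length * k) := by
    rw [zsmul_eq_mul, mul_one] at hk
    linear_combination
      -2 * 3 ^ s.length * hb + 2 * 3 ^ t.length * ha - 2 * 3 ^ s.length * 3 ^ t.length * hk
  have hint : (3 : ℤ) ^ s.length * (2 * b + 1)
      = 2 * (3 ^ t.length * a + 3 ^ s.length * 3 ^ t.length * k) := by
    exact_mod_cast hreal
  exact Int.not_even_iff_odd.2 ((Odd.pow (by decide)).mul (odd_two_mul_add_one b))
    (hint ▸ even_two_mul _)

noncomputable def ternaryMeasure (p c : ℝ) : Measure UnitAddCircle :=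
  treeMeasure (ENNReal.ofReal (p / (1 - 3 * p))) fun s => (ternaryPoint c s : UnitAddCircle)

theorem isProbabilityMeasure_ternaryMeasure {p : ℝ} (hp6 : p < 1 / 6) (c : ℝ) :
    IsProbabilityMeasure (ternaryMeasure p c) := by
  refine isProbabilityMeasure_treeMeasure ?_ _
  rw [Fintype.card_fin, Nat.cast_ofNat, ← ENNReal.ofReal_ofNat 3,
    ← ENNReal.ofReal_mul (by norm_num), ENNReal.ofReal_lt_one, mul_div_assoc',
    div_lt_one (by linarith)]
  linarith

theorem bind_ternaryMeasure {p c : ℝ} (hp : 0 ≤ p) (hp3 : 3 * p < 1)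
    (hc : ((3 * c : ℝ) : UnitAddCircle) = c) :
    (ternaryMeasure p c).bind (Qkern p) = ternaryMeasure p c := by
  have h3p : 0 < 1 - 3 * p := by linarith
  refine bind_treeMeasure (measurable_Qkern p) ?_ ?_ (Qkern_ternaryPoint p hc)
  · rw [Fintype.card_fin, Nat.cast_ofNat, ← ENNReal.ofReal_ofNat 3,
      ← ENNReal.ofReal_mul (by norm_num), ← ENNReal.ofReal_add h3p.le (by linarith)]
    norm_num
  · rw [← ENNReal.ofReal_mul h3p.le, mul_div_cancel₀ _ h3p.ne']

theorem mutuallySingular_ternaryMeasure_zero_half (p : ℝ) :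
    ternaryMeasure p 0 ⟂ₘ ternaryMeasure p (1 / 2) :=
  mutuallySingular_treeMeasure (disjoint_range_iff.2 coe_ternaryPoint_zero_ne_half) _ _

/-- Example 5.3: the kernel `Q` possesses at least two distinct — indeed mutually
singular — invariant probability measures. -/
theorem Qkern_two_invariant_measures (p : ℝ) (hp : 0 < p) (hp6 : p < 1 / 6) :
    ∃ μ₁ μ₂ : Measure UnitAddCircle,
      IsProbabilityMeasure μ₁ ∧ IsProbabilityMeasure μ₂ ∧
      μ₁.bind (Qkern p) = μ₁ ∧ μ₂.bind (Qkern p) = μ₂ ∧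
      μ₁ ≠ μ₂ ∧ μ₁.MutuallySingular μ₂ := by
  have hprob (c : ℝ) : IsProbabilityMeasure (ternaryMeasure p c) :=
    isProbabilityMeasure_ternaryMeasure hp6 c
  have hhalf : ((3 * (1 / 2) : ℝ) : UnitAddCircle) = ((1 / 2 : ℝ) : UnitAddCircle) := by
    rw [show 3 * (1 / 2 : ℝ) = 1 / 2 + 1 by norm_num]
    exact periodic_coe_unitAddCircle _
  have hsing := mutuallySingular_ternaryMeasure_zero_half p
  refine ⟨_, _, hprob 0, hprob (1 / 2), bind_ternaryMeasure hp.le (by linarith) (by simp),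
    bind_ternaryMeasure hp.le (by linarith) hhalf, fun h => ?_, hsing⟩
  rw [← h, Measure.MutuallySingular.self_iff] at hsing
  exact (hprob 0).ne_zero _ hsing
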